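/- Let z = (α, β, M) ∈ Z and assume |p| ≤ rs, |α| ≤ r, |β| ≤ s. Suppose there exist vectors ᾱ, β̄ ∈ ℝ³ such that: (i) M₀(z) + ᾱ⊗β̄ = 0; (ii) |ᾱ||β̄| ≤ G(z); (iii) (β·β̄)·√(r² − |α|²)·|ᾱ| = (α·ᾱ)·√(s² − |β|²)·|β̄|; and (iv) (α − β)·(ᾱ × β̄) = 0, where × is the cross product on ℝ³. Then z ∈ K_{r,s}^{Λ,3}. -/

import Mathlib

open Matrix

noncomputable section

/-- Vectors in ℝ³. -/
abbrev V3 := Fin 3 → ℝ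
/-- 3×3 real matrices. -/
abbrev Mat3 := Matrix (Fin 3) (Fin 3) ℝ
/-- The state space Z = ℝ³ × ℝ³ × ℝ^{3×3}. -/
abbrev Z := V3 × V3 × Mat3

/-- Euclidean dot product on ℝ³. -/
def dot3 (u v : V3) : ℝ := ∑ i, u i * v i
/-- Euclidean norm on ℝ³. -/
def norm3 (v : V3) : ℝ := Real.sqrt (dot3 v v)
/-- Outer (tensor) product u ⊗ v. -/
def outer (u v : V3) : Mat3 := Matrix.vecMulVec u v

/-- The constraint set K_{r,s}. -/
def Krs (r s p : ℝ) : Set Z :=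
  {z | z.2.2 = outer z.1 z.2.1 + p • (1 : Mat3) ∧ norm3 z.1 = r ∧ norm3 z.2.1 = s}

/-- The wave cone Λ. -/
def waveCone : Set Z :=
  {z | ∃ (ξ : V3) (c : ℝ), ξ ≠ 0 ∧ z.2.2 *ᵥ ξ + c • z.1 = 0 ∧
    z.2.2ᵀ *ᵥ ξ + c • z.2.1 = 0 ∧ dot3 z.1 ξ = 0 ∧ dot3 z.2.1 ξ = 0}

/-- M₀(z) = α⊗β − M + p·Id. -/
def M0 (p : ℝ) (z : Z) : Mat3 := outer z.1 z.2.1 - z.2.2 + p • (1 : Mat3)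

/-- G(z) = √((r² − |α|²)(s² − |β|²)). -/
def Gfun (r s : ℝ) (z : Z) : ℝ :=
  Real.sqrt ((r ^ 2 - norm3 z.1 ^ 2) * (s ^ 2 - norm3 z.2.1 ^ 2))

/-- Iterated lamination sets K_{r,s}^{Λ,i}. -/
def lamSet (r s p : ℝ) : ℕ → Set Z
  | 0 => Krs r s p
  | (i + 1) => {z | ∃ zb ∈ waveCone, ∃ t₁ t₂ : ℝ, t₁ ≤ 0 ∧ 0 ≤ t₂ ∧
      z + t₁ • zb ∈ lamSet r s p i ∧ z + t₂ • zb ∈ lamSet r s p i}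

/-- Restored from older Mathlib: the PSD square root of a positive semidefinite matrix. -/
noncomputable def Matrix.PosSemidef.sqrt {𝕜 : Type*} [RCLike 𝕜] [PartialOrder 𝕜] {n : Type*} [Fintype n]
    [DecidableEq n] {A : Matrix n n 𝕜} (hA : Matrix.PosSemidef A) : Matrix n n 𝕜 :=
  hA.1.eigenvectorUnitary.1 * Matrix.diagonal ((↑) ∘ (√·) ∘ hA.1.eigenvalues) *
    (star hA.1.eigenvectorUnitary : Matrix n n 𝕜)

/-- Nuclear norm: trace of the PSD square root of AᵀA. -/
def nuclearNorm (A : Mat3) : ℝ := (Matrix.posSemidef_conjTranspose_mul_self A).sqrt.trace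

/-- f₀(A) = (A₂₃, A₃₁, A₁₂) (0-indexed: (A 1 2, A 2 0, A 0 1)). -/
def f0 (A : Mat3) : V3 := ![A 1 2, A 2 0, A 0 1]

/-- Frobenius norm of a matrix. -/
def frobNorm (A : Mat3) : ℝ := Real.sqrt (∑ i, ∑ j, A i j ^ 2)

/-- Λ-convexity of a set. -/
def LambdaConvex (S : Set Z) : Prop :=
  ∀ z₁ ∈ S, ∀ z₂ ∈ S, z₁ - z₂ ∈ waveCone →
    ∀ t : ℝ, t ∈ Set.Icc (0 : ℝ) 1 → z₁ + t • (z₂ - z₁) ∈ S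

/-- The Λ-convex hull of K_{r,s}: the intersection of all Λ-convex sets containing it. -/
def lambdaHull (r s p : ℝ) : Set Z := ⋂₀ {S : Set Z | LambdaConvex S ∧ Krs r s p ⊆ S}

-- ===== helpers =====

lemma dot3_self_nonneg (x : V3) : 0 ≤ dot3 x x :=
  Finset.sum_nonneg fun i _ => mul_self_nonneg _

lemma norm3_sq (x : V3) : norm3 x ^ 2 = dot3 x x := Real.sq_sqrt (dot3_self_nonneg x)

lemma norm3_nonneg (x : V3) : 0 ≤ norm3 x := Real.sqrt_nonneg _

lemma norm3_eq (x : V3) (r : ℝ) (hr : 0 ≤ r) (h : dot3 x x = r ^ 2) : norm3 x = r := by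
  rw [norm3, h, Real.sqrt_sq hr]

lemma norm3_eq_zero (x : V3) (h : norm3 x = 0) : x = 0 := by
  have h2 : dot3 x x = 0 := by
    have := norm3_sq x; rw [h] at this; simpa using this.symm
  funext i
  have := (Finset.sum_eq_zero_iff_of_nonneg (fun i _ => mul_self_nonneg (x i))).mp h2 i (by simp)
  have : x i * x i = 0 := this
  simpa [mul_self_eq_zero] using this

lemma dot3_zero_left (x : V3) : dot3 0 x = 0 := by simp [dot3]

lemma zero_mem_waveCone : (0 : Z) ∈ waveCone := by
  refine ⟨![1,0,0], 0, ?_, ?_, ?_, ?_, ?_⟩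
  · intro h; have := congrFun h 0; simp at this
  · show (0 : Mat3) *ᵥ _ + (0:ℝ) • (0:V3) = 0; simp
  · show (0 : Mat3)ᵀ *ᵥ _ + (0:ℝ) • (0:V3) = 0; simp
  · simp [dot3]
  · simp [dot3]

lemma lamSet_mono (r s p : ℝ) (n : ℕ) : lamSet r s p n ⊆ lamSet r s p (n+1) := by
  intro z hz
  exact ⟨0, zero_mem_waveCone, 0, 0, le_refl _, le_refl _, by simpa, by simpa⟩

lemma tripleid (x y z : V3) : dot3 x (crossProduct y z) = dot3 z (crossProduct x y) := by
  simp [dot3, cross_apply, Fin.sum_univ_three]; ring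

lemma cross_self_dot (x y : V3) : dot3 x (crossProduct x y) = 0 := by
  simp [dot3, cross_apply, Fin.sum_univ_three]; ring

lemma cross_self_dot' (x y : V3) : dot3 y (crossProduct x y) = 0 := by
  simp [dot3, cross_apply, Fin.sum_univ_three]; ring

lemma perp_of_ne (u : V3) (hu : u ≠ 0) :
    ∃ ξ : V3, ξ ≠ 0 ∧ dot3 u ξ = 0 ∧ ∀ w : V3, crossProduct u w = 0 → dot3 w ξ = 0 := by
  have : ∃ i, u i ≠ 0 := by
    by_contra h; push_neg at h; exact hu (funext h)
  obtain ⟨i, hi⟩ := this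
  fin_cases i
  · refine ⟨![u 1, -u 0, 0], ?_, ?_, ?_⟩
    · intro h; have := congrFun h 1; simp at this; exact hi this
    · simp [dot3, Fin.sum_univ_three]; ring
    · intro w hw
      have h2 := congrFun hw 2
      simp [cross_apply] at h2
      simp [dot3, Fin.sum_univ_three]
      linear_combination -h2
  · refine ⟨![-u 1, u 0, 0], ?_, ?_, ?_⟩
    · intro h; have := congrFun h 0; simp at this; exact hi this
    · simp [dot3, Fin.sum_univ_three]; ring
    · intro w hw
      have h2 := congrFun hw 2
      simp [cross_apply] at h2
      simp [dot3, Fin.sum_univ_three]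
      linear_combination h2
  · refine ⟨![u 2, 0, -u 0], ?_, ?_, ?_⟩
    · intro h; have := congrFun h 0; simp at this; exact hi this
    · simp [dot3, Fin.sum_univ_three]; ring
    · intro w hw
      have h1 := congrFun hw 1
      simp [cross_apply] at h1
      simp [dot3, Fin.sum_univ_three]
      linear_combination h1

lemma perp3 (u v w : V3) (h : dot3 w (crossProduct u v) = 0) :
    ∃ ξ : V3, ξ ≠ 0 ∧ dot3 u ξ = 0 ∧ dot3 v ξ = 0 ∧ dot3 w ξ = 0 := by
  by_cases h1 : crossProduct u v ≠ 0
  · exact ⟨_, h1, cross_self_dot u v, cross_self_dot' u v, h⟩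
  push_neg at h1
  by_cases h2 : crossProduct u w ≠ 0
  · refine ⟨_, h2, cross_self_dot u w, ?_, cross_self_dot' u w⟩
    rw [tripleid v u w]
    have : crossProduct v u = 0 := by
      rw [← cross_anticomm, h1, neg_zero]
    rw [this, dot3]
    simp
  push_neg at h2
  by_cases h3 : crossProduct v w ≠ 0
  · refine ⟨_, h3, ?_, cross_self_dot v w, cross_self_dot' v w⟩
    rw [tripleid u v w, h1, dot3]; simp
  push_neg at h3
  by_cases hu : u ≠ 0
  · obtain ⟨ξ, hξ, hud, hann⟩ := perp_of_ne u hu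
    exact ⟨ξ, hξ, hud, hann v h1, hann w h2⟩
  push_neg at hu
  by_cases hv : v ≠ 0
  · obtain ⟨ξ, hξ, hvd, hann⟩ := perp_of_ne v hv
    refine ⟨ξ, hξ, ?_, hvd, hann w h3⟩
    rw [hu]; simp [dot3]
  push_neg at hv
  by_cases hw : w ≠ 0
  · obtain ⟨ξ, hξ, hwd, _⟩ := perp_of_ne w hw
    refine ⟨ξ, hξ, ?_, ?_, hwd⟩ <;> simp [hu, hv, dot3]
  push_neg at hw
  refine ⟨![1,0,0], ?_, ?_, ?_, ?_⟩
  · intro h'; have := congrFun h' 0; simp at this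
  all_goals simp [hu, hv, hw, dot3]

lemma waveC (u v A B : V3) (c₁ c₂ ρ : ℝ) (h : dot3 (A - B) (crossProduct u v) = 0) :
    ((c₁ • u, c₂ • v, c₁ • outer u B + c₂ • outer A v + ρ • outer u v) : Z) ∈ waveCone := by
  obtain ⟨ξ, hξ, hu, hv, hw⟩ := perp3 u v (A - B) h
  refine ⟨ξ, -(dot3 B ξ), hξ, ?_, ?_, ?_, ?_⟩
  · show (c₁ • outer u B + c₂ • outer A v + ρ • outer u v) *ᵥ ξ + _ • (c₁ • u) = 0
    funext i
    simp only [dot3, Fin.sum_univ_three, Pi.sub_apply] at hu hv hw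
    simp [Matrix.mulVec, dotProduct, outer, Matrix.vecMulVec_apply,
      Matrix.add_apply, Matrix.smul_apply, Fin.sum_univ_three, Pi.add_apply,
      Pi.smul_apply, Pi.zero_apply, smul_eq_mul, dot3]
    linear_combination (c₂ * A i + ρ * u i) * hv
  · show (c₁ • outer u B + c₂ • outer A v + ρ • outer u v)ᵀ *ᵥ ξ + _ • (c₂ • v) = 0
    funext i
    simp only [dot3, Fin.sum_univ_three, Pi.sub_apply] at hu hv hw
    simp [Matrix.mulVec, dotProduct, outer, Matrix.vecMulVec_apply,
      Matrix.add_apply, Matrix.smul_apply, Matrix.transpose_apply, Fin.sum_univ_three,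
      Pi.add_apply, Pi.smul_apply, Pi.zero_apply, smul_eq_mul, dot3]
    linear_combination (c₁ * B i + ρ * v i) * hu + c₂ * v i * hw
  · show dot3 (c₁ • u) ξ = 0
    simp only [dot3, Fin.sum_univ_three] at hu ⊢
    simp only [Pi.smul_apply, smul_eq_mul]
    linear_combination c₁ * hu
  · show dot3 (c₂ • v) ξ = 0
    simp only [dot3, Fin.sum_univ_three] at hv ⊢
    simp only [Pi.smul_apply, smul_eq_mul]
    linear_combination c₂ * hv

def Xst (p : ℝ) (α β u v : V3) (x y γ : ℝ) : Z :=
  (α + x • u, β + y • v,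
    outer (α + x • u) (β + y • v) + p • (1 : Mat3) + γ • outer u v)

lemma vec_step (α u : V3) (x t c₁ : ℝ) : α + x • u + t • (c₁ • u) = α + (x + t*c₁) • u := by
  funext i; simp [Pi.add_apply, Pi.smul_apply, smul_eq_mul]; ring

lemma mat_step (α β u v : V3) (p γ c₁ c₂ ρ t x y : ℝ) :
    outer (α + x•u) (β + y•v) + p • (1:Mat3) + γ • outer u v
      + t • (c₁ • outer u (β + y•v) + c₂ • outer (α + x•u) v + ρ • outer u v)
    = outer (α + (x + t*c₁)•u) (β + (y + t*c₂)•v) + p • (1:Mat3)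
      + (γ + t*ρ - t^2*(c₁*c₂)) • outer u v := by
  ext i j
  simp [outer, Matrix.vecMulVec_apply, Matrix.one_apply, Matrix.add_apply,
    Matrix.smul_apply, Pi.add_apply, Pi.smul_apply, smul_eq_mul]
  ring

lemma Xst_add (p : ℝ) (α β u v : V3) (x y γ c₁ c₂ ρ t : ℝ) :
    Xst p α β u v x y γ
      + t • ((c₁ • u, c₂ • v, c₁ • outer u (β + y•v) + c₂ • outer (α + x•u) v + ρ • outer u v) : Z)
    = Xst p α β u v (x + t*c₁) (y + t*c₂) (γ + t*ρ - t^2*(c₁*c₂)) := by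
  unfold Xst
  simp only [Prod.smul_mk, Prod.mk_add_mk, Prod.mk.injEq]
  exact ⟨vec_step α u x t c₁, vec_step β v y t c₂, mat_step α β u v p γ c₁ c₂ ρ t x y⟩

lemma master (r s p : ℝ) (α β u v : V3)
    (hcross : dot3 (α - β) (crossProduct u v) = 0)
    (n : ℕ) (x y γ c₁ c₂ ρ t₁ t₂ x₁ y₁ γ₁ x₂ y₂ γ₂ : ℝ)
    (ht₁ : t₁ ≤ 0) (ht₂ : 0 ≤ t₂)
    (hx₁ : x₁ = x + t₁*c₁) (hy₁ : y₁ = y + t₁*c₂) (hγ₁ : γ₁ = γ + t₁*ρ - t₁^2*(c₁*c₂))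
    (hx₂ : x₂ = x + t₂*c₁) (hy₂ : y₂ = y + t₂*c₂) (hγ₂ : γ₂ = γ + t₂*ρ - t₂^2*(c₁*c₂))
    (hm₁ : Xst p α β u v x₁ y₁ γ₁ ∈ lamSet r s p n)
    (hm₂ : Xst p α β u v x₂ y₂ γ₂ ∈ lamSet r s p n) :
    Xst p α β u v x y γ ∈ lamSet r s p (n+1) := by
  subst hx₁ hy₁ hγ₁ hx₂ hy₂ hγ₂
  have hcross' : dot3 ((α + x•u) - (β + y•v)) (crossProduct u v) = 0 := by
    simp only [dot3, cross_apply, Fin.sum_univ_three, Pi.add_apply, Pi.sub_apply,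
      Pi.smul_apply, smul_eq_mul, Matrix.cons_val_zero, Matrix.cons_val_one,
      Matrix.head_cons, Matrix.cons_val_two, Matrix.tail_cons] at hcross ⊢
    linear_combination hcross
  refine ⟨(c₁ • u, c₂ • v, c₁ • outer u (β + y•v) + c₂ • outer (α + x•u) v + ρ • outer u v),
    waveC u v (α + x•u) (β + y•v) c₁ c₂ ρ hcross', t₁, t₂, ht₁, ht₂, ?_, ?_⟩
  · rw [Xst_add]; exact hm₁
  · rw [Xst_add]; exact hm₂

lemma dot3_quad (α u : V3) (x : ℝ) :
    dot3 (α + x•u) (α + x•u) = dot3 α α + 2*x*(dot3 α u) + x^2 * (dot3 u u) := by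
  simp [dot3, Fin.sum_univ_three, Pi.add_apply, Pi.smul_apply, smul_eq_mul]; ring

lemma memK (r s p : ℝ) (hr : 0 ≤ r) (hs : 0 ≤ s) (α β u v : V3) (x y γ : ℝ)
    (hγ : γ = 0) (h1 : dot3 (α + x•u) (α + x•u) = r^2)
    (h2 : dot3 (β + y•v) (β + y•v) = s^2) :
    Xst p α β u v x y γ ∈ lamSet r s p 0 := by
  subst hγ
  unfold Xst
  exact ⟨by simp, norm3_eq _ r hr h1, norm3_eq _ s hs h2⟩

lemma norm_off (r : ℝ) (α u : V3) (huu : dot3 u u = 1) (P X : ℝ)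
    (hP2 : P^2 = (dot3 α u)^2 + r^2 - dot3 α α) (hX : (X + dot3 α u)^2 = P^2) :
    dot3 (α + X•u) (α + X•u) = r^2 := by
  rw [dot3_quad, huu]
  linear_combination hX + hP2

lemma Xst_zero (p : ℝ) (α β u v : V3) (γ : ℝ) :
    Xst p α β u v 0 0 γ = ((α, β, outer α β + p•(1:Mat3) + γ • outer u v) : Z) := by
  unfold Xst; simp

lemma toK_y (r s p : ℝ) (hr : 0 ≤ r) (hs : 0 ≤ s) (α β u v : V3)
    (huu : dot3 u u = 1) (hvv : dot3 v v = 1)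
    (hcross : dot3 (α - β) (crossProduct u v) = 0)
    (x y Q : ℝ) (hα : dot3 (α + x•u) (α + x•u) = r^2)
    (hQ2 : Q^2 = (dot3 β v)^2 + s^2 - dot3 β β)
    (hy1 : -(dot3 β v) - Q ≤ y) (hy2 : y ≤ -(dot3 β v) + Q) :
    Xst p α β u v x y 0 ∈ lamSet r s p 1 := by
  apply master r s p α β u v hcross 0 x y 0 0 1 0
    ((-(dot3 β v) - Q) - y) ((-(dot3 β v) + Q) - y)
    x (-(dot3 β v) - Q) 0 x (-(dot3 β v) + Q) 0
    (by linarith) (by linarith) (by ring) (by ring) (by ring) (by ring) (by ring) (by ring)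
  · exact memK r s p hr hs α β u v _ _ _ rfl hα
      (norm_off s β v hvv Q _ hQ2 (by ring))
  · exact memK r s p hr hs α β u v _ _ _ rfl hα
      (norm_off s β v hvv Q _ hQ2 (by ring))

lemma toK_x (r s p : ℝ) (hr : 0 ≤ r) (hs : 0 ≤ s) (α β u v : V3)
    (huu : dot3 u u = 1) (hvv : dot3 v v = 1)
    (hcross : dot3 (α - β) (crossProduct u v) = 0)
    (x y P : ℝ) (hβ : dot3 (β + y•v) (β + y•v) = s^2)
    (hP2 : P^2 = (dot3 α u)^2 + r^2 - dot3 α α)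
    (hx1 : -(dot3 α u) - P ≤ x) (hx2 : x ≤ -(dot3 α u) + P) :
    Xst p α β u v x y 0 ∈ lamSet r s p 1 := by
  apply master r s p α β u v hcross 0 x y 0 1 0 0
    ((-(dot3 α u) - P) - x) ((-(dot3 α u) + P) - x)
    (-(dot3 α u) - P) y 0 (-(dot3 α u) + P) y 0
    (by linarith) (by linarith) (by ring) (by ring) (by ring) (by ring) (by ring) (by ring)
  · exact memK r s p hr hs α β u v _ _ _ rfl
      (norm_off r α u huu P _ hP2 (by ring)) hβ
  · exact memK r s p hr hs α β u v _ _ _ rfl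
      (norm_off r α u huu P _ hP2 (by ring)) hβ

lemma case_zero (r s p : ℝ) (hr : 0 < r) (hs : 0 < s) (α β : V3)
    (hA : dot3 α α ≤ r^2) (hB : dot3 β β ≤ s^2) :
    ((α, β, outer α β + p•(1:Mat3)) : Z) ∈ lamSet r s p 2 := by
  set u : V3 := ![1,0,0] with hudef
  have huu : dot3 u u = 1 := by simp [dot3, Fin.sum_univ_three, hudef]
  have hcross : dot3 (α - β) (crossProduct u u) = 0 := by
    rw [cross_self]; simp [dot3]
  set a := dot3 α u with hadef
  set b := dot3 β u with hbdef
  set P := Real.sqrt (a^2 + r^2 - dot3 α α) with hPdef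
  set Q := Real.sqrt (b^2 + s^2 - dot3 β β) with hQdef
  have hP2 : P^2 = a^2 + r^2 - dot3 α α := Real.sq_sqrt (by nlinarith [sq_nonneg a])
  have hQ2 : Q^2 = b^2 + s^2 - dot3 β β := Real.sq_sqrt (by nlinarith [sq_nonneg b])
  have hP0 : 0 ≤ P := Real.sqrt_nonneg _
  have hQ0 : 0 ≤ Q := Real.sqrt_nonneg _
  have hPa : |a| ≤ P := by
    rw [← Real.sqrt_sq_eq_abs]
    exact Real.sqrt_le_sqrt (by nlinarith)
  have hQb : |b| ≤ Q := by
    rw [← Real.sqrt_sq_eq_abs]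
    exact Real.sqrt_le_sqrt (by nlinarith)
  rw [abs_le] at hPa hQb
  have hgoal : Xst p α β u u 0 0 0 ∈ lamSet r s p 2 := by
    apply master r s p α β u u hcross 1 0 0 0 1 0 0 (-a - P) (-a + P)
      (-a - P) 0 0 (-a + P) 0 0
      (by linarith [hPa.1, hPa.2]) (by linarith [hPa.1, hPa.2])
      (by ring) (by ring) (by ring) (by ring) (by ring) (by ring)
    · exact toK_y r s p hr.le hs.le α β u u huu huu hcross _ _ Q
        (norm_off r α u huu P _ hP2 (by ring)) hQ2 (by linarith [hQb.1]) (by linarith [hQb.2])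
    · exact toK_y r s p hr.le hs.le α β u u huu huu hcross _ _ Q
        (norm_off r α u huu P _ hP2 (by ring)) hQ2 (by linarith [hQb.1]) (by linarith [hQb.2])
  rw [Xst_zero] at hgoal
  simpa using hgoal

lemma case_eq (r s p : ℝ) (hr : 0 < r) (hs : 0 < s) (α β u v : V3)
    (huu : dot3 u u = 1) (hvv : dot3 v v = 1)
    (hcross : dot3 (α - β) (crossProduct u v) = 0)
    (f g : ℝ) (hf2 : f^2 = r^2 - dot3 α α) (hg2 : g^2 = s^2 - dot3 β β)
    (hf : 0 < f) (hg : 0 < g)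
    (hbf : dot3 β v * f = dot3 α u * g) :
    Xst p α β u v 0 0 (f*g) ∈ lamSet r s p 1 := by
  set a := dot3 α u with hadef
  set b := dot3 β v with hbdef
  set P := Real.sqrt (a^2 + f^2) with hPdef
  set Q := Real.sqrt (b^2 + g^2) with hQdef
  have hP2 : P^2 = a^2 + f^2 := Real.sq_sqrt (by positivity)
  have hQ2 : Q^2 = b^2 + g^2 := Real.sq_sqrt (by positivity)
  have hP0 : 0 < P := Real.sqrt_pos.mpr (by positivity)
  have hQ0 : 0 < Q := Real.sqrt_pos.mpr (by positivity)
  have hP2' : P^2 = a^2 + r^2 - dot3 α α := by linear_combination hP2 + hf2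
  have hQ2' : Q^2 = b^2 + s^2 - dot3 β β := by linear_combination hQ2 + hg2
  have hQf : Q*f = g*P := by
    have h1 : (Q*f)^2 = (g*P)^2 := by
      linear_combination f^2*hQ2 - g^2*hP2 + (b*f + a*g)*hbf
    exact (sq_eq_sq₀ (by positivity) (by positivity)).mp h1
  have haP : 0 < a + P := by nlinarith [hP2, hP0, mul_pos hf hf]
  have hPma : 0 < P - a := by nlinarith [hP2, hP0, mul_pos hf hf]
  have hfne : f ≠ 0 := ne_of_gt hf
  obtain ⟨t₁, ht₁f, ht₁0⟩ : ∃ t : ℝ, t*f = -(a+P) ∧ t ≤ 0 :=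
    ⟨-((a+P)/f), by rw [neg_mul, div_mul_cancel₀ _ hfne], neg_nonpos.mpr (by positivity)⟩
  obtain ⟨t₂, ht₂f, ht₂0⟩ : ∃ t : ℝ, t*f = P - a ∧ 0 ≤ t :=
    ⟨(P-a)/f, div_mul_cancel₀ _ hfne, by positivity⟩
  apply master r s p α β u v hcross 0 0 0 (f*g) f g (-2*(dot3 α u)*g) t₁ t₂
    (-a - P) (-b - Q) 0 (-a + P) (-b + Q) 0
    ht₁0 ht₂0
    (by linear_combination -ht₁f)
    ?_ ?_
    (by linear_combination -ht₂f)
    ?_ ?_ ?_ ?_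
  · -- -b - Q = 0 + t₁ * g
    have h' : (-b - Q)*f = (0 + t₁*g)*f := by
      linear_combination (-g)*ht₁f - hbf - hQf
    exact mul_right_cancel₀ (ne_of_gt hf) h'
  · -- 0 = f*g + t₁*(-2*a*g) - t₁^2*(f*g)
    have h' : (0:ℝ)*f^2 = (f*g + t₁*(-2*a*g) - t₁^2*(f*g))*f^2 := by
      linear_combination (-(f*g*(P - t₁*f - a)))*ht₁f + (f*g)*hP2
    exact mul_right_cancel₀ (by positivity) h'
  · -- -b + Q = 0 + t₂ * g
    have h' : (-b + Q)*f = (0 + t₂*g)*f := by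
      linear_combination (-g)*ht₂f - hbf + hQf
    exact mul_right_cancel₀ (ne_of_gt hf) h'
  · -- 0 = f*g + t₂*(-2*a*g) - t₂^2*(f*g)
    have h' : (0:ℝ)*f^2 = (f*g + t₂*(-2*a*g) - t₂^2*(f*g))*f^2 := by
      linear_combination (f*g*(P + t₂*f + a))*ht₂f + (f*g)*hP2
    exact mul_right_cancel₀ (by positivity) h'
  · exact memK r s p hr.le hs.le α β u v _ _ _ rfl
      (norm_off r α u huu P _ hP2' (by ring)) (norm_off s β v hvv Q _ hQ2' (by ring))
  · exact memK r s p hr.le hs.le α β u v _ _ _ rfl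
      (norm_off r α u huu P _ hP2' (by ring)) (norm_off s β v hvv Q _ hQ2' (by ring))

set_option maxHeartbeats 1000000 in
lemma case_lt (r s p : ℝ) (hr : 0 < r) (hs : 0 < s) (α β u v : V3)
    (huu : dot3 u u = 1) (hvv : dot3 v v = 1)
    (hcross : dot3 (α - β) (crossProduct u v) = 0)
    (f g c₀ : ℝ) (hf2 : f^2 = r^2 - dot3 α α) (hg2 : g^2 = s^2 - dot3 β β)
    (hf : 0 < f) (hg : 0 < g)
    (hbf : dot3 β v * f = dot3 α u * g)
    (hc₀ : 0 < c₀) (hlt : c₀ < f*g) :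
    Xst p α β u v 0 0 c₀ ∈ lamSet r s p 3 := by
  set a := dot3 α u with hadef
  set b := dot3 β v with hbdef
  set P := Real.sqrt (a^2 + f^2) with hPdef
  set Q := Real.sqrt (b^2 + g^2) with hQdef
  have hP2 : P^2 = a^2 + f^2 := Real.sq_sqrt (by positivity)
  have hQ2 : Q^2 = b^2 + g^2 := Real.sq_sqrt (by positivity)
  have hP0 : 0 < P := Real.sqrt_pos.mpr (by positivity)
  have hQ0 : 0 < Q := Real.sqrt_pos.mpr (by positivity)
  have hP2' : P^2 = a^2 + r^2 - dot3 α α := by linear_combination hP2 + hf2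
  have hQ2' : Q^2 = b^2 + s^2 - dot3 β β := by linear_combination hQ2 + hg2
  have hQf : Q*f = g*P := by
    have h1 : (Q*f)^2 = (g*P)^2 := by
      linear_combination f^2*hQ2 - g^2*hP2 + (b*f + a*g)*hbf
    exact (sq_eq_sq₀ (by positivity) (by positivity)).mp h1
  have haP : 0 < a + P := by nlinarith [hP2, hP0, mul_pos hf hf]
  have hPma : 0 < P - a := by nlinarith [hP2, hP0, mul_pos hf hf]
  have hfne : f ≠ 0 := ne_of_gt hf
  have hbQf : (b + Q)*f = g*(a + P) := by linear_combination hbf + hQf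
  have hbQ : 0 < b + Q := by nlinarith [hbQf, mul_pos hg haP, hf]
  have hQb : |b| ≤ Q := by
    rw [← Real.sqrt_sq_eq_abs]
    exact Real.sqrt_le_sqrt (by nlinarith [sq_nonneg g])
  rw [abs_le] at hQb
  -- the parameter ρA of the outermost splitting
  obtain ⟨ρA, hρA, hρA0⟩ : ∃ ρ : ℝ, ρ*(a+P) = c₀*f ∧ 0 < ρ :=
    ⟨c₀*f/(a+P), div_mul_cancel₀ _ (ne_of_gt haP), by positivity⟩
  -- IVT to find T
  set hfun : ℝ → ℝ :=
    fun t => (c₀ + t*ρA)*(P + a + t*f) - (f^2 - 2*a*(t*f) - (t*f)^2)*(b+Q) with hfundef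
  have hcont : Continuous hfun := by fun_prop
  have h00 : hfun 0 < 0 := by
    have e : hfun 0 = c₀*(P+a) - f^2*(b+Q) := by rw [hfundef]; ring
    have e2 : f^2*(b+Q) = f*g*(a+P) := by linear_combination f*hbQf
    rw [e, e2]
    linarith only [mul_lt_mul_of_pos_right hlt haP]
  obtain ⟨tp, htpf, htp0⟩ : ∃ t : ℝ, t*f = P - a ∧ 0 ≤ t :=
    ⟨(P-a)/f, div_mul_cancel₀ _ hfne, by positivity⟩
  have hp0 : 0 < hfun tp := by
    have e2 : hfun tp = (c₀ + tp*ρA)*(2*P) := by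
      rw [hfundef]
      linear_combination ((c₀+tp*ρA) + (b+Q)*(2*P + (tp*f - P + a)))*htpf + (b+Q)*hP2
    rw [e2]
    have h1 : 0 < c₀ + tp*ρA := by positivity
    positivity
  obtain ⟨T, hTmem, hT0⟩ := intermediate_value_Icc htp0 hcont.continuousOn ⟨h00.le, hp0.le⟩
  have hT1 : 0 ≤ T := hTmem.1
  have hKey : (c₀ + T*ρA)*(P + a + T*f) = (f^2 - 2*a*(T*f) - (T*f)^2)*(b+Q) := by
    have h' := hT0
    rw [hfundef] at h'
    dsimp only at h'
    linarith only [h']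
  have haTf : 0 ≤ T*f := mul_nonneg hT1 hf.le
  -- opaque abbreviations
  obtain ⟨a₂, ha₂⟩ : ∃ w : ℝ, w = a + T*f := ⟨_, rfl⟩
  obtain ⟨F₂, hF₂def⟩ : ∃ w : ℝ, w = f^2 - 2*a*(T*f) - (T*f)^2 := ⟨_, rfl⟩
  obtain ⟨c₂, hc₂def⟩ : ∃ w : ℝ, w = c₀ + T*ρA := ⟨_, rfl⟩
  have hKey' : c₂*(P + a₂) = F₂*(b+Q) := by
    rw [ha₂, hF₂def, hc₂def]; linear_combination hKey
  have hc₂pos : 0 < c₂ := by rw [hc₂def]; positivity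
  have hPa₂ : 0 < P + a₂ := by rw [ha₂]; linarith only [haP, haTf]
  have hF₂pos : 0 < F₂ := by
    have h1 : 0 < c₂*(P + a₂) := mul_pos hc₂pos hPa₂
    rw [hKey'] at h1
    exact (mul_pos_iff_of_pos_right hbQ).mp h1
  have hrel : a₂^2 + F₂ = P^2 := by rw [ha₂, hF₂def]; linear_combination -hP2
  have hPma₂ : 0 < P - a₂ := by
    have h1 : 0 < (P - a₂)*(P + a₂) := by
      have e : (P - a₂)*(P + a₂) = F₂ := by linear_combination -hrel
      rw [e]; exact hF₂pos
    exact (mul_pos_iff_of_pos_right hPa₂).mp h1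
  set sF := Real.sqrt F₂ with hsFdef
  have hsF2 : sF^2 = F₂ := Real.sq_sqrt hF₂pos.le
  have hsF : 0 < sF := Real.sqrt_pos.mpr hF₂pos
  have hsFne : sF ≠ 0 := ne_of_gt hsF
  -- auxiliary quantities for the middle splitting
  obtain ⟨sG, hsGP, hsG0⟩ : ∃ w : ℝ, w*P = Q*sF ∧ 0 ≤ w :=
    ⟨Q*sF/P, div_mul_cancel₀ _ (ne_of_gt hP0), by positivity⟩
  obtain ⟨y₂, hy₂P⟩ : ∃ w : ℝ, w*P = Q*a₂ - b*P :=
    ⟨(Q*a₂ - b*P)/P, div_mul_cancel₀ _ (ne_of_gt hP0)⟩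
  have h6 : (Q*a₂ - b*P)*f = g*P*(T*f) := by
    rw [ha₂]; linear_combination (a + T*f)*hQf - P*hbf
  have h7 : 0 ≤ Q*a₂ - b*P := by
    have h0 : 0 ≤ (Q*a₂ - b*P)*f := by
      rw [h6]; exact mul_nonneg (mul_nonneg hg.le hP0.le) haTf
    exact (mul_nonneg_iff_of_pos_right hf).mp h0
  have hy₂0 : 0 ≤ y₂ := by
    have h0 : 0 ≤ y₂*P := by rw [hy₂P]; exact h7
    exact (mul_nonneg_iff_of_pos_right hP0).mp h0
  obtain ⟨γ₂, hγ₂P⟩ : ∃ w : ℝ, w*P = Q*F₂ :=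
    ⟨Q*F₂/P, div_mul_cancel₀ _ (ne_of_gt hP0)⟩
  obtain ⟨ρB, hρB⟩ : ∃ w : ℝ, w*(b+Q) = c₂ :=
    ⟨c₂/(b+Q), div_mul_cancel₀ _ (ne_of_gt hbQ)⟩
  -- E1 : state at (T*f, -b-Q, 0)
  have hE1 : Xst p α β u v (T*f) (-b - Q) 0 ∈ lamSet r s p 1 := by
    apply toK_x r s p hr.le hs.le α β u v huu hvv hcross _ _ P
      (norm_off s β v hvv Q _ hQ2' (by ring)) hP2'
      (by linarith only [haP, haTf]) (by rw [ha₂] at hPma₂; linarith only [hPma₂])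
  -- E2 : state at (T*f, y₂, γ₂)
  have hE2 : Xst p α β u v (T*f) y₂ γ₂ ∈ lamSet r s p 1 := by
    obtain ⟨t₁, ht₁f, ht₁0⟩ : ∃ t : ℝ, t*sF = -(a₂+P) ∧ t ≤ 0 :=
      ⟨-((a₂+P)/sF), by rw [neg_mul, div_mul_cancel₀ _ hsFne],
        neg_nonpos.mpr (div_nonneg (by linarith only [hPa₂]) hsF.le)⟩
    obtain ⟨t₂, ht₂f, ht₂0⟩ : ∃ t : ℝ, t*sF = P - a₂ ∧ 0 ≤ t :=
      ⟨(P - a₂)/sF, div_mul_cancel₀ _ hsFne, div_nonneg hPma₂.le hsF.le⟩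
    apply master r s p α β u v hcross 0 (T*f) y₂ γ₂ sF sG (-2*a₂*sG) t₁ t₂
      (-a - P) (-b - Q) 0 (-a + P) (-b + Q) 0 ht₁0 ht₂0
      (by linear_combination -ht₁f + ha₂) ?_ ?_
      (by linear_combination -ht₂f + ha₂) ?_ ?_ ?_ ?_
    · -- -b - Q = y₂ + t₁ * sG
      have h' : (-b - Q)*P = (y₂ + t₁*sG)*P := by
        linear_combination (-1)*hy₂P + (-t₁)*hsGP + (-Q)*ht₁f
      exact mul_right_cancel₀ (ne_of_gt hP0) h'
    · -- 0 = γ₂ + t₁*ρ₂ - t₁^2*(sF*sG)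
      have h' : (0:ℝ)*P = (γ₂ + t₁*(-2*a₂*sG) - t₁^2*(sF*sG))*P := by
        linear_combination (2*a₂*t₁ + t₁^2*sF)*hsGP + (-1)*hγ₂P
          + (Q*(t₁*sF + a₂ - P))*ht₁f + (-Q)*hrel
      exact mul_right_cancel₀ (ne_of_gt hP0) h'
    · -- -b + Q = y₂ + t₂ * sG
      have h' : (-b + Q)*P = (y₂ + t₂*sG)*P := by
        linear_combination (-1)*hy₂P + (-t₂)*hsGP + (-Q)*ht₂f
      exact mul_right_cancel₀ (ne_of_gt hP0) h'
    · -- 0 = γ₂ + t₂*ρ₂ - t₂^2*(sF*sG)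
      have h' : (0:ℝ)*P = (γ₂ + t₂*(-2*a₂*sG) - t₂^2*(sF*sG))*P := by
        linear_combination (2*a₂*t₂ + t₂^2*sF)*hsGP + (-1)*hγ₂P
          + (Q*(t₂*sF + a₂ + P))*ht₂f + (-Q)*hrel
      exact mul_right_cancel₀ (ne_of_gt hP0) h'
    · exact memK r s p hr.le hs.le α β u v _ _ _ rfl
        (norm_off r α u huu P _ hP2' (by ring)) (norm_off s β v hvv Q _ hQ2' (by ring))
    · exact memK r s p hr.le hs.le α β u v _ _ _ rfl
        (norm_off r α u huu P _ hP2' (by ring)) (norm_off s β v hvv Q _ hQ2' (by ring))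
  -- R : state at (T*f, 0, c₂)
  have hR : Xst p α β u v (T*f) 0 c₂ ∈ lamSet r s p 2 := by
    apply master r s p α β u v hcross 1 (T*f) 0 c₂ 0 1 ρB (-b - Q) y₂
      (T*f) (-b - Q) 0 (T*f) y₂ γ₂ (by linarith only [hbQ]) hy₂0
      (by ring) (by ring) ?_ (by ring) (by ring) ?_ hE1 hE2
    · -- 0 = c₂ + (-b-Q)*ρB - (-b-Q)^2*(0*1)
      have h' : (0:ℝ)*(b+Q) = (c₂ + (-b - Q)*ρB - (-b - Q)^2*(0*1))*(b+Q) := by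
        linear_combination (b+Q)*hρB
      exact mul_right_cancel₀ (ne_of_gt hbQ) h'
    · -- γ₂ = c₂ + y₂*ρB - y₂^2*(0*1)
      have h' : γ₂*(P*(b+Q)) = (c₂ + y₂*ρB - y₂^2*(0*1))*(P*(b+Q)) := by
        linear_combination (b+Q)*hγ₂P + (-Q)*hKey' + (-c₂)*hy₂P + (-(y₂*P))*hρB
      exact mul_right_cancel₀ (by positivity) h'
  -- L : state at (-a-P, 0, 0)
  have hL : Xst p α β u v (-a - P) 0 0 ∈ lamSet r s p 1 := by
    apply toK_y r s p hr.le hs.le α β u v huu hvv hcross _ _ Q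
      (norm_off r α u huu P _ hP2' (by ring)) hQ2'
      (by linarith only [hQb.1]) (by linarith only [hQb.2])
  -- final assembly
  obtain ⟨tL, htLf, htL0⟩ : ∃ t : ℝ, t*f = -(a+P) ∧ t ≤ 0 :=
    ⟨-((a+P)/f), by rw [neg_mul, div_mul_cancel₀ _ hfne], neg_nonpos.mpr (by positivity)⟩
  apply master r s p α β u v hcross 2 0 0 c₀ f 0 ρA tL T
    (-a - P) 0 0 (T*f) 0 c₂ htL0 hT1
    (by linear_combination -htLf) (by ring) ?_ (by ring) (by ring)
    (by rw [hc₂def]; ring) (lamSet_mono r s p 1 hL) hR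
  · -- 0 = c₀ + tL*ρA - tL^2*(f*0)
    have h' : (0:ℝ)*(f*(a+P)) = (c₀ + tL*ρA - tL^2*(f*0))*(f*(a+P)) := by
      linear_combination (-(c₀*f))*htLf + (-(tL*f))*hρA
    exact mul_right_cancel₀ (by positivity) h'

lemma outer_smul₂ (x y : V3) (c d : ℝ) : outer (c•x) (d•y) = (c*d) • outer x y := by
  ext i j
  simp [outer, Matrix.vecMulVec_apply, Matrix.smul_apply, smul_eq_mul]
  ring

lemma cross_smul₂ (x y : V3) (c d : ℝ) :
    crossProduct (c•x) (d•y) = (c*d) • crossProduct x y := by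
  funext i
  fin_cases i <;>
    simp [cross_apply, Pi.smul_apply, smul_eq_mul] <;> ring

lemma dot3_smul_right (x y : V3) (c : ℝ) : dot3 x (c•y) = c * dot3 x y := by
  simp [dot3, Fin.sum_univ_three]; ring

lemma dot3_smul₂ (x y : V3) (c d : ℝ) : dot3 (c•x) (d•y) = (c*d) * dot3 x y := by
  simp [dot3, Fin.sum_univ_three]; ring

set_option maxHeartbeats 1000000 in
theorem stmt0 (r s p : ℝ) (hr : 0 < r) (hs : 0 < s) (z : Z)
    (hp : |p| ≤ r * s) (hα : norm3 z.1 ≤ r) (hβ : norm3 z.2.1 ≤ s)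
    (h : ∃ a b : V3,
      M0 p z + outer a b = 0 ∧
      norm3 a * norm3 b ≤ Gfun r s z ∧
      dot3 z.2.1 b * Real.sqrt (r ^ 2 - norm3 z.1 ^ 2) * norm3 a =
        dot3 z.1 a * Real.sqrt (s ^ 2 - norm3 z.2.1 ^ 2) * norm3 b ∧
      dot3 (z.1 - z.2.1) (crossProduct a b) = 0) :
    z ∈ lamSet r s p 3 := by
  obtain ⟨ab, bb, h1, h2, h3, h4⟩ := h
  obtain ⟨α, β, M⟩ := z
  dsimp only at hα hβ h1 h2 h3 h4 ⊢
  have hA2 : dot3 α α ≤ r^2 := by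
    have h' := pow_le_pow_left₀ (norm3_nonneg α) hα 2
    rwa [norm3_sq] at h'
  have hB2 : dot3 β β ≤ s^2 := by
    have h' := pow_le_pow_left₀ (norm3_nonneg β) hβ 2
    rwa [norm3_sq] at h'
  have hM : M = outer α β + p • (1:Mat3) + outer ab bb := by
    have h' : outer α β - M + p • (1:Mat3) + outer ab bb = 0 := h1
    have h'' : M - (outer α β + p • (1:Mat3) + outer ab bb)
        = -(outer α β - M + p • (1:Mat3) + outer ab bb) := by abel
    rw [h', neg_zero] at h''
    exact sub_eq_zero.mp h''
  by_cases hc : norm3 ab * norm3 bb = 0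
  · -- degenerate case : the dyad vanishes
    have hout : outer ab bb = 0 := by
      rcases mul_eq_zero.mp hc with h'|h'
      · rw [norm3_eq_zero _ h']; ext i j; simp [outer, Matrix.vecMulVec_apply]
      · rw [norm3_eq_zero _ h']; ext i j; simp [outer, Matrix.vecMulVec_apply]
    rw [hout, add_zero] at hM
    rw [hM]
    exact lamSet_mono r s p 2 (case_zero r s p hr hs α β hA2 hB2)
  · have hna : 0 < norm3 ab := by
      rcases (norm3_nonneg ab).lt_or_eq with h'|h'
      · exact h'
      · exact absurd (by rw [← h']; ring) hc
    have hnb : 0 < norm3 bb := by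
      rcases (norm3_nonneg bb).lt_or_eq with h'|h'
      · exact h'
      · exact absurd (by rw [← h']; ring) hc
    set na := norm3 ab with hnadef
    set nb := norm3 bb with hnbdef
    set u := (na : ℝ)⁻¹ • ab with hudef
    set v := (nb : ℝ)⁻¹ • bb with hvdef
    have hu' : na • u = ab := by
      rw [hudef, smul_smul, mul_inv_cancel₀ (ne_of_gt hna), one_smul]
    have hv' : nb • v = bb := by
      rw [hvdef, smul_smul, mul_inv_cancel₀ (ne_of_gt hnb), one_smul]
    have hda : dot3 ab ab = na^2 := (norm3_sq ab).symm
    have hdb : dot3 bb bb = nb^2 := (norm3_sq bb).symm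
    have hnane : na ≠ 0 := ne_of_gt hna
    have hnbne : nb ≠ 0 := ne_of_gt hnb
    have huu : dot3 u u = 1 := by
      rw [hudef, dot3_smul₂, hda]
      field_simp
    have hvv : dot3 v v = 1 := by
      rw [hvdef, dot3_smul₂, hdb]
      field_simp
    have hnab : (0:ℝ) < na * nb := mul_pos hna hnb
    -- cross condition
    have h4' : dot3 (α - β) (crossProduct u v) = 0 := by
      have e : crossProduct ab bb = (na*nb) • crossProduct u v := by
        rw [← hu', ← hv', cross_smul₂]
      rw [e, dot3_smul_right] at h4
      exact (mul_eq_zero.mp h4).resolve_left (ne_of_gt hnab)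
    -- sqrt quantities
    set f := Real.sqrt (r^2 - dot3 α α) with hfdef
    set g := Real.sqrt (s^2 - dot3 β β) with hgdef
    have hf2 : f^2 = r^2 - dot3 α α := Real.sq_sqrt (by linarith only [hA2])
    have hg2 : g^2 = s^2 - dot3 β β := Real.sq_sqrt (by linarith only [hB2])
    have hf0 : 0 ≤ f := Real.sqrt_nonneg _
    have hg0 : 0 ≤ g := Real.sqrt_nonneg _
    -- the bound h2
    have hle : na * nb ≤ f * g := by
      have e : Gfun r s (α, β, M) = f * g := by
        rw [Gfun, hfdef, hgdef]
        dsimp only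
        rw [norm3_sq, norm3_sq, ← Real.sqrt_mul (by linarith only [hA2])]
      rwa [e] at h2
    -- compatibility
    have hbf : dot3 β v * f = dot3 α u * g := by
      rw [norm3_sq, norm3_sq] at h3
      have e1 : dot3 β bb = nb * dot3 β v := by rw [← hv', dot3_smul_right]
      have e2 : dot3 α ab = na * dot3 α u := by rw [← hu', dot3_smul_right]
      rw [e1, e2, ← hfdef, ← hgdef] at h3
      apply mul_left_cancel₀ (ne_of_gt hnab)
      linear_combination h3
    -- M in normalized form
    have hM' : M = outer α β + p • (1:Mat3) + (na*nb) • outer u v := by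
      rw [hM]
      congr 1
      rw [← hu', ← hv', outer_smul₂]
    rw [hM', ← Xst_zero]
    rcases lt_or_eq_of_le hle with hlt | heq
    · have hfg : 0 < f * g := lt_trans hnab hlt
      obtain ⟨hf, hg⟩ : 0 < f ∧ 0 < g := by
        rcases mul_pos_iff.mp hfg with h'|h'
        · exact h'
        · exact absurd h'.1 (not_lt.mpr hf0)
      exact case_lt r s p hr hs α β u v huu hvv h4' f g (na*nb) hf2 hg2 hf hg hbf hnab hlt
    · rw [heq]
      have hfg : 0 < f * g := by rw [← heq]; exact hnab
      obtain ⟨hf, hg⟩ : 0 < f ∧ 0 < g := by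
        rcases mul_pos_iff.mp hfg with h'|h'
        · exact h'
        · exact absurd h'.1 (not_lt.mpr hf0)
      exact lamSet_mono r s p 2 (lamSet_mono r s p 1
        (case_eq r s p hr hs α β u v huu hvv h4' f g hf2 hg2 hf hg hbf))
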